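/- If β = [0; S̄] where S has odd length and β ∈ E, then β is an isolated point of B(β): there exists ε > 0 such that B(β) ∩ (β, β + ε) = ∅, where one may take the interval (β, S·0) with S·0 = [0;S]. -/

import Mathlib

noncomputable def gauss (x : ℝ) : ℝ := Int.fract x⁻¹

def B (t : ℝ) : Set ℝ := {x ∈ Set.Icc (0:ℝ) 1 | ∀ k : ℕ, t ≤ gauss^[k] x}

def E : Set ℝ := {x ∈ Set.Icc (0:ℝ) 1 | ∀ k : ℕ, x ≤ gauss^[k] x}

noncomputable def cf (S : List ℕ) (x : ℝ) : ℝ :=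
  S.foldr (fun a y => 1 / ((a : ℝ) + y)) x

/-!
Since `|S|` is odd, `y ↦ S·y` is strictly decreasing on `[0, ∞)`, so `β = S·β < S·0` and every
`x ∈ (β, S·0)` lies strictly between `S·β` and `S·0`. If `x` lies strictly between `a·c` and `a·d`
with `c, d ∈ [0, 1]`, then `1/x` lies strictly between `a + c` and `a + d`, so `G x` lies strictly
between `c` and `d`. Iterating along `S`, `G^|S| x` lies strictly between `β` and `0`, hence
`x ∉ B(β)`.
-/

open Set

lemma cf_cons (a : ℕ) (S : List ℕ) (y : ℝ) : cf (a :: S) y = 1 / ((a : ℝ) + cf S y) := rfl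

lemma cf_nonneg (S : List ℕ) {y : ℝ} (hy : 0 ≤ y) : 0 ≤ cf S y := by
  induction S with
  | nil => exact hy
  | cons a T ih => rw [cf_cons]; positivity

lemma cf_pos {S : List ℕ} (hpos : ∀ a ∈ S, 1 ≤ a) (hS : S ≠ []) {y : ℝ} (hy : 0 ≤ y) :
    0 < cf S y := by
  obtain ⟨a, T, rfl⟩ := List.exists_cons_of_ne_nil hS
  have ha : (1 : ℝ) ≤ a := by exact_mod_cast hpos a List.mem_cons_self
  rw [cf_cons]
  have := cf_nonneg T hy
  positivity

lemma cf_mem_Icc {S : List ℕ} (hpos : ∀ a ∈ S, 1 ≤ a) {y : ℝ} (hy : y ∈ Icc (0 : ℝ) 1) :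
    cf S y ∈ Icc (0 : ℝ) 1 := by
  induction S with
  | nil => exact hy
  | cons a T ih =>
    have ha : (1 : ℝ) ≤ a := by exact_mod_cast hpos a List.mem_cons_self
    have hT := (ih fun b hb => hpos b (List.mem_cons_of_mem a hb)).1
    rw [cf_cons]
    exact ⟨by positivity, by rw [div_le_one (by linarith)]; linarith⟩

lemma cf_strictMonoOn_strictAntiOn {S : List ℕ} (hpos : ∀ a ∈ S, 1 ≤ a) :
    (Even S.length → StrictMonoOn (cf S) (Ici 0)) ∧
    (Odd S.length → StrictAntiOn (cf S) (Ici 0)) := by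
  induction S with
  | nil => exact ⟨fun _ => strictMono_id.strictMonoOn _, by simp⟩
  | cons a T ih =>
    have ha : (1 : ℝ) ≤ a := by exact_mod_cast hpos a List.mem_cons_self
    have hinv : StrictAntiOn (fun z : ℝ => 1 / ((a : ℝ) + z)) (Ici 0) := fun y hy z hz hyz =>
      one_div_lt_one_div_of_lt (by linarith [mem_Ici.1 hy]) (by linarith)
    have hmaps : MapsTo (cf T) (Ici 0) (Ici 0) := fun _ => cf_nonneg T
    obtain ⟨ihe, iho⟩ := ih fun b hb => hpos b (List.mem_cons_of_mem a hb)
    refine ⟨fun he => hinv.comp (iho ?_) hmaps, fun ho => hinv.comp_strictMonoOn (ihe ?_) hmaps⟩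
    · simpa [Nat.even_add_one] using he
    · simpa [Nat.odd_add_one] using ho

lemma inv_mem_uIoo_of_mem_uIoo_inv {p q x : ℝ} (hp : 0 < p) (hq : 0 < q)
    (hx : x ∈ uIoo p⁻¹ q⁻¹) : x⁻¹ ∈ uIoo p q := by
  wlog hpq : p ≤ q generalizing p q
  · rw [uIoo_comm] at hx ⊢
    exact this hq hp hx (le_of_not_ge hpq)
  rw [uIoo_of_ge (inv_anti₀ hp hpq)] at hx
  have hx0 : 0 < x := (inv_pos.2 hq).trans hx.1
  rw [uIoo_of_le hpq]
  exact ⟨lt_inv_of_lt_inv₀ hx0 hx.2, inv_lt_of_inv_lt₀ hq hx.1⟩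

lemma gauss_mem_uIoo {a : ℕ} (ha : 1 ≤ a) {c d x : ℝ} (hc : c ∈ Icc (0 : ℝ) 1)
    (hd : d ∈ Icc (0 : ℝ) 1) (hx : x ∈ uIoo (1 / ((a : ℝ) + c)) (1 / ((a : ℝ) + d))) :
    gauss x ∈ uIoo c d := by
  have ha' : (1 : ℝ) ≤ a := by exact_mod_cast ha
  simp only [one_div] at hx
  have hinv := inv_mem_uIoo_of_mem_uIoo_inv (by linarith [hc.1]) (by linarith [hd.1]) hx
  have hfloor : ⌊x⁻¹⌋ = a := by
    have hmem : x⁻¹ ∈ Ioo (a : ℝ) (a + 1) := uIoo_subset_Ioo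
      ⟨by linarith [hc.1], by linarith [hc.2]⟩ ⟨by linarith [hd.1], by linarith [hd.2]⟩ hinv
    rw [Int.floor_eq_iff]
    push_cast
    exact ⟨hmem.1.le, hmem.2⟩
  rw [uIoo, mem_Ioo, min_add_add_left, max_add_add_left] at hinv
  rw [gauss, ← Int.self_sub_floor, hfloor, Int.cast_natCast]
  exact ⟨by linarith [hinv.1], by linarith [hinv.2]⟩

lemma iterate_gauss_mem_uIoo {S : List ℕ} (hpos : ∀ a ∈ S, 1 ≤ a) {u v : ℝ}
    (hu : u ∈ Icc (0 : ℝ) 1) (hv : v ∈ Icc (0 : ℝ) 1) {x : ℝ} (hx : x ∈ uIoo (cf S u) (cf S v)) :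
    gauss^[S.length] x ∈ uIoo u v := by
  induction S generalizing x with
  | nil => exact hx
  | cons a T ih =>
    have hTpos : ∀ b ∈ T, 1 ≤ b := fun b hb => hpos b (List.mem_cons_of_mem a hb)
    rw [List.length_cons, Function.iterate_succ_apply]
    exact ih hTpos (gauss_mem_uIoo (hpos a List.mem_cons_self)
      (cf_mem_Icc hTpos hu) (cf_mem_Icc hTpos hv) hx)

theorem isolated_of_odd_period_general (S : List ℕ) (hpos : ∀ a ∈ S, 1 ≤ a)
    (hodd : Odd S.length) (β : ℝ) (hβ : β ∈ Set.Icc (0:ℝ) 1)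
    (hfix : cf S β = β) :
    ∃ ε > 0, B β ∩ Set.Ioo β (β + ε) = ∅ := by
  have hS : S ≠ [] := by rintro rfl; simp at hodd
  have hβ_pos : 0 < β := hfix ▸ cf_pos hpos hS hβ.1
  have hβ_lt : β < cf S 0 := by
    simpa only [hfix] using (cf_strictMonoOn_strictAntiOn hpos).2 hodd
      (mem_Ici.2 le_rfl) hβ.1 hβ_pos
  refine ⟨cf S 0 - β, by linarith, eq_empty_of_forall_notMem ?_⟩
  rintro x ⟨hxB, hβx, hx⟩
  have hx' : x ∈ uIoo (cf S β) (cf S 0) := by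
    rw [hfix]; exact mem_uIoo_of_lt hβx (by linarith)
  have hG := iterate_gauss_mem_uIoo hpos hβ ⟨le_rfl, zero_le_one⟩ hx'
  rw [uIoo_of_ge hβ.1] at hG
  exact (hxB.2 S.length).not_gt hG.2

/-- If `β = [0;S̄]` with `|S|` odd and `β ∈ E`, then `β` is isolated from the
right in `B β`. -/
theorem isolated_of_odd_period (S : List ℕ) (hpos : ∀ a ∈ S, 1 ≤ a)
    (hodd : Odd S.length) (β : ℝ) (hβ : β ∈ Set.Icc (0:ℝ) 1)
    (hfix : cf S β = β) (hE : β ∈ E) :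
    ∃ ε > 0, B β ∩ Set.Ioo β (β + ε) = ∅ :=
  isolated_of_odd_period_general S hpos hodd β hβ hfix
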